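/- Let p and q be probability distributions on k elements with non-increasingly ordered entries such that p ≻ q, and let δ ≥ 0. Then the steepest δ-approximations satisfy p̄^(δ) ≻ q̄^(δ). -/

import Mathlib

/-!
Writing `r = p + (δ/2) e₁`, the partial sums of `p̄^(δ)` are `min 1 (Σ_{i≤l} rᵢ)`: the steepest
approximation just caps the cumulative sums of `r` at `1` (when `p̄^(δ) = e₁`, because then
`r₁ ≥ 1`). Since `t ↦ min 1 t` is concave and non-decreasing and the cumulative sums of the
non-increasing, nonnegative `r` are concave and non-decreasing in `l`, the capped sums are again
concave, i.e. `p̄^(δ)` is non-increasing. Its partial sums are then those of its decreasing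
rearrangement, and they depend monotonically on those of `p`.
-/

open Finset

noncomputable section

/-- The ℓ¹ distance `‖a − b‖ = Σᵢ |aᵢ − bᵢ|` between two vectors in `ℝ^k`. -/
def l1dist {k : ℕ} (a b : Fin k → ℝ) : ℝ := ∑ i, |a i - b i|

/-- A probability distribution on `k` elements: nonnegative entries summing to 1. -/
def IsProbDist {k : ℕ} (p : Fin k → ℝ) : Prop := (∀ i, 0 ≤ p i) ∧ ∑ i, p i = 1

/-- The vector `a` rearranged in non-increasing order, `a↓`. -/
def descSort {k : ℕ} (a : Fin k → ℝ) : Fin k → ℝ := fun i => a (Tuple.sort a i.rev)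

/-- The sum of the first `l` entries of `a` (1-based indexing: entries `1,…,l`). -/
def psum {k : ℕ} (a : Fin k → ℝ) (l : ℕ) : ℝ :=
  ∑ i ∈ univ.filter (fun i : Fin k => (i : ℕ) < l), a i

/-- The sum of the entries of `a` from position `l` to `k` (1-based indexing). -/
def tailSum {k : ℕ} (a : Fin k → ℝ) (l : ℕ) : ℝ :=
  ∑ i ∈ univ.filter (fun i : Fin k => l ≤ (i : ℕ) + 1), a i

/-- `a` majorizes `b` (`a ≻ b`): the total sums agree and all partial sums of the
non-increasing rearrangements satisfy `Σ_{i=1}^l a↓ᵢ ≥ Σ_{i=1}^l b↓ᵢ` for `l = 1,…,k`. -/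
def Majorizes {k : ℕ} (a b : Fin k → ℝ) : Prop :=
  (∑ i, a i = ∑ i, b i) ∧
  ∀ l : ℕ, 1 ≤ l → l ≤ k → psum (descSort b) l ≤ psum (descSort a) l

/-- The distribution `e₁ = (1,0,…,0)`. -/
def e1 (k : ℕ) : Fin k → ℝ := fun i => if (i : ℕ) = 0 then 1 else 0

/-- The uniform distribution `η = (1/k,…,1/k)`. -/
def unif (k : ℕ) : Fin k → ℝ := fun _ => (k : ℝ)⁻¹

/-- The unnormalised vector `r` in the construction of the steepest approximation:
`r₁ = p₁ + δ/2`, `rᵢ = pᵢ` otherwise. -/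
def steepR {k : ℕ} (δ : ℝ) (p : Fin k → ℝ) : Fin k → ℝ :=
  fun i => if (i : ℕ) = 0 then p i + δ / 2 else p i

/-- `lstar ∈ {1,…,k}` is the truncation index of the steepest `δ`-approximation of `p`:
`Σ_{i=1}^{l*} rᵢ ≤ 1 < Σ_{i=1}^{l*+1} rᵢ` (the second sum being meaningful for `l* < k`). -/
def IsTruncIdx {k : ℕ} (δ : ℝ) (p : Fin k → ℝ) (lstar : ℕ) : Prop :=
  1 ≤ lstar ∧ lstar ≤ k ∧ psum (steepR δ p) lstar ≤ 1 ∧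
    (lstar < k → 1 < psum (steepR δ p) (lstar + 1))

/-- `pbar` is the steepest `δ`-approximation `p̄^(δ)` of `p` (assumed non-increasingly
ordered): if `‖p − e₁‖ ≤ δ` then `pbar = e₁`; otherwise `pbar` agrees with `r` on the
first `l*` entries, has `1 − Σ_{i=1}^{l*} rᵢ` at position `l*+1`, and `0` afterwards. -/
def IsSteepest {k : ℕ} (δ : ℝ) (p pbar : Fin k → ℝ) : Prop :=
  (l1dist p (e1 k) ≤ δ ∧ pbar = e1 k) ∨
  (δ < l1dist p (e1 k) ∧ ∃ lstar : ℕ, IsTruncIdx δ p lstar ∧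
    ∀ i : Fin k, pbar i =
      if (i : ℕ) < lstar then steepR δ p i
      else if (i : ℕ) = lstar then 1 - psum (steepR δ p) lstar
      else 0)

/-- `ε(x) = Σ_{i : pᵢ ≥ x} (pᵢ − x)`. -/
def epsFn {k : ℕ} (p : Fin k → ℝ) (x : ℝ) : ℝ :=
  ∑ i ∈ univ.filter (fun i : Fin k => x ≤ p i), (p i - x)

/-- `γ(y) = Σ_{i : pᵢ ≤ y} (y − pᵢ)`. -/
def gammaFn {k : ℕ} (p : Fin k → ℝ) (y : ℝ) : ℝ :=
  ∑ i ∈ univ.filter (fun i : Fin k => p i ≤ y), (y - p i)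

/-- `pflat` is the flattest `δ`-approximation of `p` built from the cutting level `x*` and
the filling level `y*`: `x*, y* ∈ [0,1]`, `ε(x*) = γ(y*) = δ/2`, and `pflat` equals `x*`
where `pᵢ ≥ x*`, equals `y*` where `pᵢ ≤ y*`, and equals `pᵢ` otherwise. -/
def IsFlattestWith {k : ℕ} (δ : ℝ) (p pflat : Fin k → ℝ) (x y : ℝ) : Prop :=
  x ∈ Set.Icc (0 : ℝ) 1 ∧ y ∈ Set.Icc (0 : ℝ) 1 ∧
  epsFn p x = δ / 2 ∧ gammaFn p y = δ / 2 ∧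
  ∀ i : Fin k, pflat i = if x ≤ p i then x else if p i ≤ y then y else p i

/-- `pflat` is the flattest `δ`-approximation `p̲^(δ)` of `p` (assumed non-increasingly
ordered): if `‖p − η‖ ≤ δ` then `pflat = η`; otherwise it is obtained by cutting at
level `x*` and filling at level `y*`. -/
def IsFlattest {k : ℕ} (δ : ℝ) (p pflat : Fin k → ℝ) : Prop :=
  (l1dist p (unif k) ≤ δ ∧ pflat = unif k) ∨
  (δ < l1dist p (unif k) ∧ ∃ x y : ℝ, IsFlattestWith δ p pflat x y)

end

section PartialSums

variable {k : ℕ}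

theorem descSort_eq_of_antitone {a : Fin k → ℝ} (ha : Antitone a) : descSort a = a := by
  have hmono : Monotone (a ∘ Fin.revPerm) := fun i j hij => ha (Fin.rev_le_rev.mpr hij)
  have hsort : a ∘ Fin.revPerm = a ∘ Tuple.sort a := Tuple.comp_sort_eq_comp_iff_monotone.mpr hmono
  funext i
  simpa [descSort] using (congrFun hsort i.rev).symm

theorem majorizes_iff_of_antitone {a b : Fin k → ℝ} (ha : Antitone a) (hb : Antitone b) :
    Majorizes a b ↔
      (∑ i, a i = ∑ i, b i) ∧ ∀ l : ℕ, 1 ≤ l → l ≤ k → psum b l ≤ psum a l := by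
  rw [Majorizes, descSort_eq_of_antitone ha, descSort_eq_of_antitone hb]

theorem psum_eq_sum (a : Fin k → ℝ) : psum a k = ∑ i, a i := by
  rw [psum, filter_true_of_mem fun i _ => i.isLt]

theorem psum_succ (a : Fin k → ℝ) {l : ℕ} (hl : l < k) :
    psum a (l + 1) = psum a l + a ⟨l, hl⟩ := by
  have hins : univ.filter (fun i : Fin k => (i : ℕ) < l + 1) =
      insert ⟨l, hl⟩ (univ.filter fun i : Fin k => (i : ℕ) < l) := by
    ext i
    simp only [mem_filter, mem_univ, true_and, mem_insert, Fin.ext_iff]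
    omega
  rw [psum, hins, sum_insert (by simp), add_comm, psum]

theorem psum_mono {a : Fin k → ℝ} (ha : ∀ i, 0 ≤ a i) {l m : ℕ} (hlm : l ≤ m) :
    psum a l ≤ psum a m :=
  sum_le_sum_of_subset_of_nonneg (monotone_filter_right _ fun _ _ hi => by omega)
    fun i _ _ => ha i

theorem le_psum {a : Fin k → ℝ} (ha : ∀ i, 0 ≤ a i) {i : Fin k} {l : ℕ} (hi : (i : ℕ) < l) :
    a i ≤ psum a l :=
  single_le_sum (fun j _ => ha j) (by simpa using hi)

theorem psum_congr {a b : Fin k → ℝ} {l : ℕ} (h : ∀ i : Fin k, (i : ℕ) < l → a i = b i) :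
    psum a l = psum b l :=
  sum_congr rfl fun i hi => h i (by simpa using hi)

theorem psum_eq_of_eq_zero_of_le {a : Fin k → ℝ} {l m : ℕ} (hlm : l ≤ m)
    (hzero : ∀ i : Fin k, l ≤ (i : ℕ) → a i = 0) : psum a m = psum a l := by
  refine (sum_subset (monotone_filter_right _ fun _ _ hi => by omega) fun i _ hi => ?_).symm
  exact hzero i (by simpa using hi)

end PartialSums

theorem min_sub_min_le_min_sub_min {c x y z w : ℝ} (hxy : x ≤ y) (hyz : y ≤ z)
    (hw : w - z ≤ y - x) : min c w - min c z ≤ min c y - min c x := by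
  rcases le_total c z with hcz | hzc
  · have := min_le_min_left c hxy
    rw [min_eq_left hcz]
    linarith [min_le_left c w]
  · rw [min_eq_right hzc, min_eq_right (hyz.trans hzc), min_eq_right (hxy.trans (hyz.trans hzc))]
    linarith [min_le_right c w]

theorem antitone_of_psum_eq_min {k : ℕ} {r b : Fin k → ℝ} {c : ℝ} (hr : Antitone r)
    (hr0 : ∀ i, 0 ≤ r i) (hb : ∀ l ≤ k, psum b l = min c (psum r l)) : Antitone b := by
  have hb_eq (i : Fin k) : b i = min c (psum r (i + 1)) - min c (psum r i) := by
    rw [← hb _ i.isLt, ← hb _ i.isLt.le, psum_succ b i.isLt]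
    ring
  intro i j hij
  rcases hij.eq_or_lt with rfl | hlt
  · rfl
  rw [hb_eq, hb_eq]
  refine min_sub_min_le_min_sub_min (psum_mono hr0 (Nat.le_succ _)) (psum_mono hr0 hlt) ?_
  rw [psum_succ r i.isLt, psum_succ r j.isLt]
  linarith [hr hlt.le]

section Steepest

variable {k : ℕ} {δ : ℝ}

theorem steepR_nonneg (hδ : 0 ≤ δ) {p : Fin k → ℝ} (hp : ∀ i, 0 ≤ p i) (i : Fin k) :
    0 ≤ steepR δ p i := by
  unfold steepR
  split_ifs
  · linarith [hp i]
  · exact hp i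

theorem steepR_antitone (hδ : 0 ≤ δ) {p : Fin k → ℝ} (hp : Antitone p) :
    Antitone (steepR δ p) := by
  intro i j hij
  have hij' : (i : ℕ) ≤ j := hij
  unfold steepR
  split_ifs <;> first | linarith [hp hij] | omega

theorem psum_steepR (p : Fin k → ℝ) (l : ℕ) :
    psum (steepR δ p) l = psum p l + δ / 2 * psum (e1 k) l := by
  rw [psum, psum, psum, mul_sum, ← sum_add_distrib]
  refine sum_congr rfl fun i _ => ?_
  simp only [steepR, e1]
  split_ifs <;> ring

theorem two_mul_one_sub_le_l1dist_e1 {n : ℕ} {p : Fin (n + 1) → ℝ} (hp : ∑ i, p i = 1) :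
    2 * (1 - p 0) ≤ l1dist p (e1 (n + 1)) := by
  rw [Fin.sum_univ_succ] at hp
  have htail : ∑ i : Fin n, p i.succ ≤ ∑ i : Fin n, |p i.succ| :=
    sum_le_sum fun i _ => le_abs_self _
  simp only [l1dist, Fin.sum_univ_succ, e1, Fin.val_zero, Fin.val_succ, if_true,
    Nat.succ_ne_zero, if_false, sub_zero]
  linarith [neg_abs_le (p 0 - 1)]

theorem psum_e1_eq_min (hδ : 0 ≤ δ) {p : Fin k → ℝ} (hp : IsProbDist p)
    (hdist : l1dist p (e1 k) ≤ δ) (l : ℕ) : psum (e1 k) l = min 1 (psum (steepR δ p) l) := by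
  obtain ⟨n, rfl⟩ : ∃ n, k = n + 1 :=
    Nat.exists_eq_succ_of_ne_zero (by rintro rfl; simpa using hp.2)
  rcases l with _ | l
  · simp [psum]
  have he1 : psum (e1 (n + 1)) (l + 1) = 1 := by
    rw [psum, sum_eq_single 0 (fun i _ hi => by simp [e1, hi]) (by simp)]
    simp [e1]
  have hfirst : steepR δ p 0 ≤ psum (steepR δ p) (l + 1) :=
    le_psum (steepR_nonneg hδ hp.1) (Nat.succ_pos l)
  have hdist' := two_mul_one_sub_le_l1dist_e1 hp.2
  simp only [steepR, Fin.val_zero, if_true] at hfirst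
  rw [he1, min_eq_left (by linarith)]

theorem psum_truncate_eq_min {a b : Fin k → ℝ} (ha : ∀ i, 0 ≤ a i) {m : ℕ}
    (hm : psum a m ≤ 1) (hm_succ : m < k → 1 < psum a (m + 1))
    (hb : ∀ i : Fin k, b i =
      if (i : ℕ) < m then a i else if (i : ℕ) = m then 1 - psum a m else 0)
    {l : ℕ} (hl : l ≤ k) : psum b l = min 1 (psum a l) := by
  rcases le_or_gt l m with hlm | hml
  · rw [min_eq_right ((psum_mono ha hlm).trans hm)]
    exact psum_congr fun i hi => by rw [hb, if_pos (by omega)]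
  have hmk : m < k := by omega
  have hbm : b ⟨m, hmk⟩ = 1 - psum a m := by simp [hb]
  calc psum b l = psum b (m + 1) :=
        psum_eq_of_eq_zero_of_le hml fun i hi => by rw [hb, if_neg (by omega), if_neg (by omega)]
    _ = psum a m + (1 - psum a m) := by
        rw [psum_succ b hmk, hbm, psum_congr fun i hi => by rw [hb, if_pos hi]]
    _ = min 1 (psum a l) := by
        rw [min_eq_left ((hm_succ hmk).trans_le (psum_mono ha hml)).le]
        ring

theorem IsSteepest.psum_eq (hδ : 0 ≤ δ) {p pbar : Fin k → ℝ} (hp : IsProbDist p)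
    (h : IsSteepest δ p pbar) {l : ℕ} (hl : l ≤ k) :
    psum pbar l = min 1 (psum (steepR δ p) l) := by
  rcases h with ⟨hdist, rfl⟩ | ⟨-, m, ⟨-, -, hm, hm_succ⟩, hpbar⟩
  · exact psum_e1_eq_min hδ hp hdist l
  · exact psum_truncate_eq_min (steepR_nonneg hδ hp.1) hm hm_succ hpbar hl

theorem IsSteepest.antitone (hδ : 0 ≤ δ) {p pbar : Fin k → ℝ} (hp : IsProbDist p)
    (hpord : Antitone p) (h : IsSteepest δ p pbar) : Antitone pbar :=
  antitone_of_psum_eq_min (steepR_antitone hδ hpord) (steepR_nonneg hδ hp.1)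
    fun _ hl => h.psum_eq hδ hp hl

end Steepest

/-- the steepest `δ`-approximation preserves the majorization order. -/
theorem steepest_preserves_majorization {k : ℕ} (δ : ℝ) (hδ : 0 ≤ δ)
    (p q : Fin k → ℝ) (hp : IsProbDist p) (hq : IsProbDist q)
    (hpord : Antitone p) (hqord : Antitone q) (hmaj : Majorizes p q)
    (pbar qbar : Fin k → ℝ)
    (hpbar : IsSteepest δ p pbar) (hqbar : IsSteepest δ q qbar) :
    Majorizes pbar qbar := by
  rw [majorizes_iff_of_antitone hpord hqord] at hmaj
  rw [majorizes_iff_of_antitone (hpbar.antitone hδ hp hpord) (hqbar.antitone hδ hq hqord)]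
  refine ⟨?_, fun l hl hlk => ?_⟩
  · rw [← psum_eq_sum, ← psum_eq_sum, hpbar.psum_eq hδ hp le_rfl, hqbar.psum_eq hδ hq le_rfl,
      psum_steepR, psum_steepR, psum_eq_sum p, psum_eq_sum q, hmaj.1]
  · rw [hpbar.psum_eq hδ hp hlk, hqbar.psum_eq hδ hq hlk, psum_steepR, psum_steepR]
    gcongr
    exact hmaj.2 l hl hlk
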